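/- arXiv:1610.06521 — 5 statements merged into one kernel-verified Lean document; each statement's English description precedes it below -/
import Mathlib

section
/- If G is a graph on n > 2·4^s vertices, then the number of s-cliques in G plus the number of s-cliques in the complement of G is at least n^s / (2^s · 4^{s^2}). -/
/-!
Every set of `4 ^ s` vertices contains an `s`-clique of `F` or of `Fᶜ` (Erdős–Szekeres). Double
counting these monochromatic `s`-sets inside all `4 ^ s`-sets yields at least
`choose n s / choose (4 ^ s) s` of them, and for `n ≥ 2 s - 2` this quotient is at least
`(n / 2) ^ s / (4 ^ s) ^ s`.
-/

open SimpleGraph Finset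

namespace SimpleGraph

variable {V : Type*} [DecidableEq V] (G : SimpleGraph V) [DecidableRel G.Adj]

theorem card_filter_adj_add_card_filter_compl_adj {A : Finset V} {v : V}
    (hv : v ∈ A) : #{w ∈ A | G.Adj v w} + #{w ∈ A | Gᶜ.Adj v w} + 1 = #A := by
  have hnot : {w ∈ A | ¬G.Adj v w} = insert v {w ∈ A | Gᶜ.Adj v w} := by
    ext w
    by_cases hw : w = v
    · subst hw; simp [hv]
    · simp [compl_adj, hw, Ne.symm hw]
  rw [← card_filter_add_card_filter_not (s := A) (fun w => G.Adj v w), hnot,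
    card_insert_of_notMem (by simp), add_assoc]

/-- The Erdős–Szekeres bound `R(a, b) ≤ 2 ^ (a + b)`. -/
theorem exists_isNClique_or_isNClique_compl :
    ∀ (a b : ℕ) (A : Finset V), 2 ^ (a + b) ≤ #A →
      ∃ T ⊆ A, G.IsNClique a T ∨ Gᶜ.IsNClique b T
  | 0, _, _, _ => ⟨∅, empty_subset _, .inl (isNClique_empty.2 rfl)⟩
  | _, 0, _, _ => ⟨∅, empty_subset _, .inr (isNClique_empty.2 rfl)⟩
  | a + 1, b + 1, A, hA => by
    obtain ⟨v, hv⟩ : A.Nonempty := card_pos.1 (lt_of_lt_of_le (by positivity) hA)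
    have hsplit : 2 ^ (a + (b + 1)) ≤ #{w ∈ A | G.Adj v w} ∨
        2 ^ (a + 1 + b) ≤ #{w ∈ A | Gᶜ.Adj v w} := by
      have := G.card_filter_adj_add_card_filter_compl_adj hv
      have : 2 ^ (a + 1 + (b + 1)) = 2 ^ (a + (b + 1)) + 2 ^ (a + 1 + b) := by ring
      omega
    rcases hsplit with hN | hM
    · obtain ⟨T, hTN, hT | hT⟩ := exists_isNClique_or_isNClique_compl a (b + 1) _ hN
      · exact ⟨insert v T, insert_subset hv (hTN.trans (filter_subset _ _)),
          .inl (hT.insert fun w hw => (mem_filter.1 (hTN hw)).2)⟩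
      · exact ⟨T, hTN.trans (filter_subset _ _), .inr hT⟩
    · obtain ⟨T, hTM, hT | hT⟩ := exists_isNClique_or_isNClique_compl (a + 1) b _ hM
      · exact ⟨T, hTM.trans (filter_subset _ _), .inl hT⟩
      · exact ⟨insert v T, insert_subset hv (hTM.trans (filter_subset _ _)),
          .inr (hT.insert fun w hw => (mem_filter.1 (hTM hw)).2)⟩
termination_by a b => a + b

theorem exists_isNClique_or_isNClique_compl_of_four_pow_le {s : ℕ}
    {A : Finset V} (hA : 4 ^ s ≤ #A) : ∃ T ⊆ A, G.IsNClique s T ∨ Gᶜ.IsNClique s T :=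
  G.exists_isNClique_or_isNClique_compl s s A <| by rwa [← two_mul, pow_mul]

end SimpleGraph

/-- Double count the pairs `T ⊆ S` with `T ∈ U` and `#S = m`: every `S` contains at least one
`T`, and every `T` lies in `choose (n - s) (m - s)` of the sets `S`. -/
theorem Finset.choose_le_card_mul_choose_of_forall_exists_subset {α : Type*} [Fintype α]
    [DecidableEq α] {U : Finset (Finset α)} {s m : ℕ} (hsm : s ≤ m)
    (hm : m ≤ Fintype.card α)
    (hU : ∀ T ∈ U, #T = s) (hcover : ∀ S : Finset α, #S = m → ∃ T ∈ U, T ⊆ S) :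
    (Fintype.card α).choose s ≤ #U * m.choose s := by
  set n := Fintype.card α
  have hcount : n.choose m ≤ #U * (n - s).choose (m - s) := by
    have := card_mul_le_card_mul (s := powersetCard m univ) (t := U) (fun S T => T ⊆ S)
      (m := 1) (n := (n - s).choose (m - s)) ?_ ?_
    · simpa [n] using this
    · intro S hS
      obtain ⟨T, hTU, hTS⟩ := hcover S (mem_powersetCard.1 hS).2
      exact card_pos.2 ⟨T, (mem_bipartiteAbove _).2 ⟨hTU, hTS⟩⟩
    · intro T hT
      rw [bipartiteBelow, card_filter_powersetCard_subset T univ m (subset_univ T)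
        ((hU T hT).trans_le hsm), card_univ, hU T hT]
  have hpos : 0 < (n - s).choose (m - s) := Nat.choose_pos (by omega)
  refine Nat.le_of_mul_le_mul_right ?_ hpos
  calc n.choose s * (n - s).choose (m - s) = n.choose m * m.choose s := (Nat.choose_mul hsm).symm
    _ ≤ #U * (n - s).choose (m - s) * m.choose s := by gcongr
    _ = #U * m.choose s * (n - s).choose (m - s) := by ring

theorem Nat.pow_le_two_pow_mul_descFactorial {n s : ℕ} (h : 2 * s ≤ n + 2) :
    n ^ s ≤ 2 ^ s * n.descFactorial s :=
  calc n ^ s ≤ (2 * (n + 1 - s)) ^ s := Nat.pow_le_pow_left (by omega) s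
    _ = 2 ^ s * (n + 1 - s) ^ s := Nat.mul_pow ..
    _ ≤ 2 ^ s * n.descFactorial s := by gcongr; exact Nat.pow_sub_le_descFactorial n s

theorem stmt0_general (s n : ℕ) (hn : 2 * 4 ^ s < n)
    (F : SimpleGraph (Fin n)) [DecidableRel F.Adj] :
    (n : ℝ) ^ s / (2 ^ s * 4 ^ s ^ 2) ≤
      ((F.cliqueFinset s).card + (Fᶜ.cliqueFinset s).card : ℝ) := by
  set U := F.cliqueFinset s ∪ Fᶜ.cliqueFinset s
  have hs : s < 4 ^ s := Nat.lt_pow_self (by norm_num)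
  have hU : ∀ T ∈ U, #T = s := fun T hT => by
    rcases mem_union.1 hT with h | h <;> exact (mem_cliqueFinset_iff.1 h).2
  have hcover : ∀ S : Finset (Fin n), #S = 4 ^ s → ∃ T ∈ U, T ⊆ S := fun S hS => by
    obtain ⟨T, hTS, hT | hT⟩ := F.exists_isNClique_or_isNClique_compl_of_four_pow_le hS.ge
    exacts [⟨T, mem_union_left _ (mem_cliqueFinset_iff.2 hT), hTS⟩,
      ⟨T, mem_union_right _ (mem_cliqueFinset_iff.2 hT), hTS⟩]
  have hchoose : n.choose s ≤ #U * (4 ^ s).choose s := by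
    simpa using choose_le_card_mul_choose_of_forall_exists_subset hs.le
      (by rw [Fintype.card_fin]; omega) hU hcover
  have hnat : n ^ s ≤ 2 ^ s * 4 ^ s ^ 2 * #U :=
    calc n ^ s ≤ 2 ^ s * n.descFactorial s := Nat.pow_le_two_pow_mul_descFactorial (by omega)
      _ = 2 ^ s * (s.factorial * n.choose s) := by rw [Nat.descFactorial_eq_factorial_mul_choose]
      _ ≤ 2 ^ s * (s.factorial * (#U * (4 ^ s).choose s)) := by gcongr
      _ = 2 ^ s * (4 ^ s).descFactorial s * #U := by
          rw [Nat.descFactorial_eq_factorial_mul_choose]; ring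
      _ ≤ 2 ^ s * 4 ^ s ^ 2 * #U := by
          rw [sq, pow_mul]; gcongr; exact Nat.descFactorial_le_pow _ _
  have hU_card : #U ≤ #(F.cliqueFinset s) + #(Fᶜ.cliqueFinset s) := card_union_le _ _
  rw [div_le_iff₀ (by positivity)]
  calc (n : ℝ) ^ s ≤ 2 ^ s * 4 ^ s ^ 2 * #U := by exact_mod_cast hnat
    _ ≤ 2 ^ s * 4 ^ s ^ 2 * (#(F.cliqueFinset s) + #(Fᶜ.cliqueFinset s)) := by
        gcongr; exact_mod_cast hU_card
    _ = _ := by ring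

/-- **Lemma (Ramsey multiplicity).** If `F` is a graph on `n > 2·4^s` vertices, then the
number of `s`-cliques of `F` plus the number of `s`-cliques of its complement is at least
`n^s / (2^s · 4^(s^2))`. -/
theorem stmt0 (s n : ℕ) (hs : 0 < s) (hn : 2 * 4 ^ s < n)
    (F : SimpleGraph (Fin n)) [DecidableRel F.Adj] :
    (n : ℝ) ^ s / (2 ^ s * 4 ^ s ^ 2) ≤
      ((F.cliqueFinset s).card + (Fᶜ.cliqueFinset s).card : ℝ) :=
  stmt0_general s n hn F
end

section
/- Let G be an n-vertex K_r-free graph with no induced copy of K_{s,t}. If t_m(G) denotes the number of m-cliques of G, then m·t_m(G) ≤ 2(t+r)^{tm/s}(r+s)^s · n^{m-(m-1)/s} + (r+s)^s · n^{m-1}. -/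
open SimpleGraph Finset

/-- `H` occurs in `G` as an induced subgraph. -/
def HasInducedCopy {α β : Type*} (H : SimpleGraph α) (G : SimpleGraph β) : Prop :=
  Nonempty (H ↪g G)

/-!
Double counting gives `m·t_m ≤ ∑_J |N(J)|`, summed over the `(m-1)`-cliques `J`, where `N(J)` is the
common neighbourhood of `J`; write `|N(J)| ≤ q + (|N(J)| - q)` with `q = C(r+s-2, r-1)`, the
Erdős–Szekeres bound for the Ramsey number `R(r, s)`. As `G` is `K_r`-free, every `q`-subset of
`N(J)` contains an independent `s`-set, so `N(J)` contains at least `((|N(J)| - q)/q)^s` of them.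
Conversely an independent `s`-set has fewer than `C(r+t-2, r-1)` common neighbours (otherwise they
would contain an independent `t`-set, completing an induced `K_{s,t}`), so it lies in `N(J)` for few
cliques `J`. Together with the power mean inequality this bounds `∑_J (|N(J)| - q)`.
-/

lemma Nat.choose_add_sub_two_le_pow {r s : ℕ} (hr : 0 < r) (hs : 0 < s) :
    (r + s - 2).choose (r - 1) ≤ (r + s) ^ s := by
  obtain ⟨a, rfl⟩ : ∃ a, r = a + 1 := ⟨r - 1, by omega⟩
  obtain ⟨b, rfl⟩ : ∃ b, s = b + 1 := ⟨s - 1, by omega⟩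
  rw [show a + 1 + (b + 1) - 2 = a + b by omega, Nat.add_sub_cancel, Nat.choose_symm_add]
  exact (Nat.choose_le_pow _ _).trans
    ((Nat.pow_le_pow_left (by omega) b).trans (Nat.pow_le_pow_right (by omega) (by omega)))

namespace Finset
variable {α : Type*} {W : Finset α} {F : Finset (Finset α)} {q s : ℕ}

lemma le_of_forall_mem_powersetCard_exists_subset (hF : F ⊆ W.powersetCard s)
    (hcover : ∀ Q ∈ W.powersetCard q, ∃ S ∈ F, S ⊆ Q) (hq : q ≤ #W) : s ≤ q := by
  obtain ⟨Q, hQ⟩ := powersetCard_nonempty.2 hq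
  obtain ⟨S, hS, hSQ⟩ := hcover Q hQ
  simpa [(mem_powersetCard.1 (hF hS)).2, (mem_powersetCard.1 hQ).2] using card_le_card hSQ

variable [DecidableEq α]

lemma card_filter_superset_powersetCard_le {S : Finset α} (hSW : S ⊆ W) (q : ℕ) :
    #{Q ∈ W.powersetCard q | S ⊆ Q} ≤ (#W - #S).choose (q - #S) := by
  rw [← card_sdiff_of_subset hSW, ← card_powersetCard]
  refine card_le_card_of_injOn (· \ S) (fun Q hQ => ?_) (fun Q₁ h₁ Q₂ h₂ he => ?_)
  · simp only [mem_coe, mem_filter, mem_powersetCard] at hQ ⊢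
    exact ⟨sdiff_subset_sdiff hQ.1.1 le_rfl, by rw [card_sdiff_of_subset hQ.2, hQ.1.2]⟩
  · simp only [mem_coe, mem_filter] at h₁ h₂
    rw [← sdiff_union_of_subset h₁.2, ← sdiff_union_of_subset h₂.2]
    exact congrArg (· ∪ S) he

lemma choose_le_card_mul_choose (hF : F ⊆ W.powersetCard s)
    (hcover : ∀ Q ∈ W.powersetCard q, ∃ S ∈ F, S ⊆ Q) (hq : q ≤ #W) :
    (#W).choose s ≤ #F * q.choose s := by
  have hsq := le_of_forall_mem_powersetCard_exists_subset hF hcover hq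
  have hcount : (#W).choose q ≤ #F * (#W - s).choose (q - s) := by
    rw [← card_powersetCard]
    calc #(W.powersetCard q) ≤ #(F.biUnion fun S => {Q ∈ W.powersetCard q | S ⊆ Q}) := by
          refine card_le_card fun Q hQ => ?_
          obtain ⟨S, hS, hSQ⟩ := hcover Q hQ
          exact mem_biUnion.2 ⟨S, hS, mem_filter.2 ⟨hQ, hSQ⟩⟩
      _ ≤ #F * (#W - s).choose (q - s) := card_biUnion_le_card_mul _ _ _ fun S hS => by
          obtain ⟨hSW, rfl⟩ := mem_powersetCard.1 (hF hS)
          exact card_filter_superset_powersetCard_le hSW q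
  refine Nat.le_of_mul_le_mul_right ?_ (Nat.choose_pos (Nat.sub_le_sub_right hq s))
  calc (#W).choose s * (#W - s).choose (q - s) = (#W).choose q * q.choose s :=
        (Nat.choose_mul hsq).symm
    _ ≤ #F * (#W - s).choose (q - s) * q.choose s := Nat.mul_le_mul_right _ hcount
    _ = #F * q.choose s * (#W - s).choose (q - s) := by ring

lemma sub_pow_le_pow_mul_card (hF : F ⊆ W.powersetCard s)
    (hcover : ∀ Q ∈ W.powersetCard q, ∃ S ∈ F, S ⊆ Q) (hs : 0 < s) :
    (#W - q) ^ s ≤ q ^ s * #F := by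
  rcases lt_or_ge #W q with hWq | hq
  · simp [Nat.sub_eq_zero_of_le hWq.le, hs.ne']
  have hsq := le_of_forall_mem_powersetCard_exists_subset hF hcover hq
  calc (#W - q) ^ s ≤ (#W + 1 - s) ^ s := Nat.pow_le_pow_left (by omega) s
    _ ≤ s.factorial * (#W).choose s := by
        rw [← Nat.descFactorial_eq_factorial_mul_choose]; exact Nat.pow_sub_le_descFactorial _ _
    _ ≤ s.factorial * (#F * q.choose s) :=
        Nat.mul_le_mul_left _ (choose_le_card_mul_choose hF hcover hq)
    _ = q.descFactorial s * #F := by rw [Nat.descFactorial_eq_factorial_mul_choose]; ring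
    _ ≤ q ^ s * #F := Nat.mul_le_mul_right _ (Nat.descFactorial_le_pow q s)

end Finset

namespace SimpleGraph
variable {V : Type*} {G : SimpleGraph V}

lemma hasInducedCopy_completeBipartiteGraph {s t : ℕ} {S T : Finset V} (hS : G.IsNIndepSet s S)
    (hT : G.IsNIndepSet t T) (hST : ∀ u ∈ S, ∀ v ∈ T, G.Adj u v) :
    HasInducedCopy (completeBipartiteGraph (Fin s) (Fin t)) G := by
  let e₁ := (equivFinOfCardEq hS.card_eq).symm
  let e₂ := (equivFinOfCardEq hT.card_eq).symm
  have hindep {U : Finset V} (hU : G.IsIndepSet U) {u v : V} (hu : u ∈ U) (hv : v ∈ U) :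
      ¬G.Adj u v := fun h => hU hu hv h.ne h
  refine ⟨⟨⟨Sum.elim (fun i => (e₁ i : V)) (fun j => (e₂ j : V)), ?_⟩, ?_⟩⟩
  · refine (Subtype.val_injective.comp e₁.injective).sumElim
      (Subtype.val_injective.comp e₂.injective) fun i j (h : (e₁ i : V) = e₂ j) => ?_
    exact G.irrefl (hST _ (h ▸ (e₁ i).2) _ (e₂ j).2)
  · rintro (i | j) (i' | j')
    · exact iff_of_false (hindep hS.isIndepSet (e₁ i).2 (e₁ i').2) (by simp)
    · exact iff_of_true (hST _ (e₁ i).2 _ (e₂ j').2) (by simp)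
    · exact iff_of_true (hST _ (e₁ i').2 _ (e₂ j).2).symm (by simp)
    · exact iff_of_false (hindep hT.isIndepSet (e₂ j).2 (e₂ j').2) (by simp)

variable [DecidableEq V]

lemma IsNIndepSet.insert {n : ℕ} {s : Finset V} {v : V} (hs : G.IsNIndepSet n s)
    (h : ∀ u ∈ s, v ≠ u ∧ ¬G.Adj v u) : G.IsNIndepSet (n + 1) (insert v s) := by
  rw [← isNClique_compl] at hs ⊢
  exact hs.insert fun u hu => (compl_adj G v u).2 (h u hu)

variable [DecidableRel G.Adj]

theorem exists_isNClique_or_isNIndepSet (a b : ℕ) (W : Finset V) (hW : (a + b).choose a ≤ #W) :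
    (∃ S ⊆ W, G.IsNClique (a + 1) S) ∨ ∃ T ⊆ W, G.IsNIndepSet (b + 1) T := by
  induction a generalizing b W with
  | zero =>
    obtain ⟨v, hv⟩ := card_pos.1 (by simpa using hW)
    exact .inl ⟨{v}, by simpa using hv, by simp⟩
  | succ a iha =>
    induction b generalizing W with
    | zero =>
      obtain ⟨v, hv⟩ := card_pos.1 (by simpa using hW)
      exact .inr ⟨{v}, by simpa using hv, by simp [isNIndepSet_iff]⟩
    | succ b ihb =>
      obtain ⟨v, hv⟩ := card_pos.1 (lt_of_lt_of_le (Nat.choose_pos (by omega)) hW)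
      set N := {u ∈ W.erase v | G.Adj v u}
      set M := {u ∈ W.erase v | ¬G.Adj v u}
      have hNM : #N + #M + 1 = #W := by
        rw [card_filter_add_card_filter_not, card_erase_add_one hv]
      have hpascal : (a + 1 + (b + 1)).choose (a + 1) =
          (a + (b + 1)).choose a + (a + 1 + b).choose (a + 1) := by
        rw [show a + 1 + (b + 1) = a + (b + 1) + 1 by omega, Nat.choose_succ_succ',
          show a + (b + 1) = a + 1 + b by omega]
      have hNW : N ⊆ W := (filter_subset _ _).trans (erase_subset _ _)
      have hMW : M ⊆ W := (filter_subset _ _).trans (erase_subset _ _)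
      by_cases hN : (a + (b + 1)).choose a ≤ #N
      · rcases iha (b + 1) N hN with ⟨S, hSN, hS⟩ | ⟨T, hTN, hT⟩
        · refine .inl ⟨insert v S, insert_subset hv (hSN.trans hNW), ?_⟩
          exact hS.insert fun u hu => (mem_filter.1 (hSN hu)).2
        · exact .inr ⟨T, hTN.trans hNW, hT⟩
      · rcases ihb M (by omega) with ⟨S, hSM, hS⟩ | ⟨T, hTM, hT⟩
        · exact .inl ⟨S, hSM.trans hMW, hS⟩
        · refine .inr ⟨insert v T, insert_subset hv (hTM.trans hMW), hT.insert fun u hu => ?_⟩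
          obtain ⟨hu, hvu⟩ := mem_filter.1 (hTM hu)
          exact ⟨(ne_of_mem_erase hu).symm, hvu⟩

lemma CliqueFree.exists_isNIndepSet {r s : ℕ} (hr : 0 < r) (hs : 0 < s) (hG : G.CliqueFree r)
    {W : Finset V} (hW : (r + s - 2).choose (r - 1) ≤ #W) : ∃ T ⊆ W, G.IsNIndepSet s T := by
  obtain ⟨a, rfl⟩ : ∃ a, r = a + 1 := ⟨r - 1, by omega⟩
  obtain ⟨b, rfl⟩ : ∃ b, s = b + 1 := ⟨s - 1, by omega⟩
  rw [show a + 1 + (b + 1) - 2 = a + b by omega, Nat.add_sub_cancel] at hW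
  exact (exists_isNClique_or_isNIndepSet a b W hW).resolve_left fun ⟨S, _, hS⟩ => hG S hS

variable [Fintype V]

variable (G) in
def commonNeighborFinset (J : Finset V) : Finset V := {v | ∀ u ∈ J, G.Adj u v}

@[simp] lemma mem_commonNeighborFinset {J : Finset V} {v : V} :
    v ∈ G.commonNeighborFinset J ↔ ∀ u ∈ J, G.Adj u v := by
  simp [commonNeighborFinset]

lemma subset_commonNeighborFinset_comm {S J : Finset V} :
    S ⊆ G.commonNeighborFinset J ↔ J ⊆ G.commonNeighborFinset S := by
  simp only [subset_iff, mem_commonNeighborFinset]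
  exact ⟨fun h u hu v hv => (h hv u hu).symm, fun h u hu v hv => (h hv u hu).symm⟩

variable {r s t : ℕ}

lemma card_commonNeighborFinset_lt (hr : 0 < r) (ht : 0 < t) (hKr : G.CliqueFree r)
    (hind : ¬HasInducedCopy (completeBipartiteGraph (Fin s) (Fin t)) G) {S : Finset V}
    (hS : G.IsNIndepSet s S) : #(G.commonNeighborFinset S) < (r + t - 2).choose (r - 1) := by
  by_contra! h
  obtain ⟨T, hTS, hT⟩ := hKr.exists_isNIndepSet hr ht h
  exact hind (hasInducedCopy_completeBipartiteGraph hS hT fun u hu v hv =>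
    mem_commonNeighborFinset.1 (hTS hv) u hu)

lemma sub_pow_le_card_indepSetFinset (hr : 0 < r) (hs : 0 < s) (hKr : G.CliqueFree r)
    (W : Finset V) : (#W - (r + s - 2).choose (r - 1)) ^ s ≤
      (r + s - 2).choose (r - 1) ^ s * #{S ∈ G.indepSetFinset s | S ⊆ W} := by
  refine sub_pow_le_pow_mul_card (fun S hS => ?_) (fun Q hQ => ?_) hs
  · rw [mem_filter, mem_indepSetFinset_iff] at hS
    exact mem_powersetCard.2 ⟨hS.2, hS.1.card_eq⟩
  · obtain ⟨hQW, hQ⟩ := mem_powersetCard.1 hQ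
    obtain ⟨T, hTQ, hT⟩ := hKr.exists_isNIndepSet hr hs hQ.ge
    exact ⟨T, mem_filter.2 ⟨mem_indepSetFinset_iff.2 hT, hTQ.trans hQW⟩, hTQ⟩

lemma sum_card_indepSetFinset_subset_commonNeighborFinset_le (hr : 0 < r) (ht : 0 < t)
    (hKr : G.CliqueFree r) (hind : ¬HasInducedCopy (completeBipartiteGraph (Fin s) (Fin t)) G)
    (k : ℕ) :
    ∑ J ∈ G.cliqueFinset k, #{S ∈ G.indepSetFinset s | S ⊆ G.commonNeighborFinset J} ≤
      (Fintype.card V).choose s * ((r + t - 2).choose (r - 1) - 1).choose k := by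
  calc ∑ J ∈ G.cliqueFinset k, #{S ∈ G.indepSetFinset s | S ⊆ G.commonNeighborFinset J}
      = ∑ S ∈ G.indepSetFinset s, #{J ∈ G.cliqueFinset k | S ⊆ G.commonNeighborFinset J} :=
        sum_card_bipartiteAbove_eq_sum_card_bipartiteBelow _
    _ ≤ #(G.indepSetFinset s) * ((r + t - 2).choose (r - 1) - 1).choose k := by
        refine sum_le_card_nsmul _ _ _ fun S hS => ?_
        have hlt := card_commonNeighborFinset_lt hr ht hKr hind (mem_indepSetFinset_iff.1 hS)
        calc #{J ∈ G.cliqueFinset k | S ⊆ G.commonNeighborFinset J}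
            ≤ #((G.commonNeighborFinset S).powersetCard k) := card_le_card fun J hJ => by
              rw [mem_filter, mem_cliqueFinset_iff, subset_commonNeighborFinset_comm] at hJ
              exact mem_powersetCard.2 ⟨hJ.2, hJ.1.card_eq⟩
          _ ≤ _ := by rw [card_powersetCard]; exact Nat.choose_le_choose k (by omega)
    _ ≤ (Fintype.card V).choose s * ((r + t - 2).choose (r - 1) - 1).choose k := by
        gcongr
        rw [← card_univ, ← card_powersetCard]
        exact card_le_card fun S hS =>
          mem_powersetCard.2 ⟨subset_univ S, (mem_indepSetFinset_iff.1 hS).card_eq⟩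

lemma card_cliqueFinset_succ_mul_le (k : ℕ) :
    #(G.cliqueFinset (k + 1)) * (k + 1) ≤
      ∑ J ∈ G.cliqueFinset k, #(G.commonNeighborFinset J) := by
  rw [← card_sigma, ← sum_const_nat fun K hK => (mem_cliqueFinset_iff.1 hK).card_eq,
    ← card_sigma]
  refine card_le_card_of_injOn (fun p => ⟨p.1.erase p.2, p.2⟩) (fun p hp => ?_) ?_
  · obtain ⟨hK, hv⟩ := mem_sigma.1 hp
    rw [mem_cliqueFinset_iff] at hK
    refine mem_sigma.2
      ⟨mem_cliqueFinset_iff.2 ⟨hK.isClique.subset (erase_subset _ _), ?_⟩, ?_⟩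
    · rw [card_erase_of_mem hv, hK.card_eq, Nat.add_sub_cancel]
    · exact mem_commonNeighborFinset.2 fun u hu =>
        hK.isClique (mem_of_mem_erase hu) hv (ne_of_mem_erase hu)
  · rintro ⟨K, v⟩ hp ⟨K', v'⟩ hp' h
    simp only [Sigma.mk.inj_iff, heq_eq_eq] at h
    obtain ⟨hKK', rfl⟩ := h
    have hv : v ∈ K := (mem_sigma.1 hp).2
    have hv' : v ∈ K' := (mem_sigma.1 hp').2
    have hK : K = K' := by rw [← insert_erase hv, ← insert_erase hv', hKK']
    rw [hK]

lemma card_cliqueFinset_succ_mul_le_add (hr : 0 < r) (hs : 0 < s) (k : ℕ) :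
    (k + 1) * #(G.cliqueFinset (k + 1)) ≤ (r + s) ^ s * Fintype.card V ^ k +
      ∑ J ∈ G.cliqueFinset k, (#(G.commonNeighborFinset J) - (r + s - 2).choose (r - 1)) := by
  set q := (r + s - 2).choose (r - 1)
  calc (k + 1) * #(G.cliqueFinset (k + 1))
      ≤ ∑ J ∈ G.cliqueFinset k, (q + (#(G.commonNeighborFinset J) - q)) := by
        rw [mul_comm]
        exact (card_cliqueFinset_succ_mul_le k).trans (sum_le_sum fun J _ => le_add_tsub)
    _ ≤ _ := by
        rw [sum_add_distrib, sum_const, smul_eq_mul, mul_comm]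
        gcongr
        · exact Nat.choose_add_sub_two_le_pow hr hs
        · exact card_cliqueFinset_le.trans (Nat.choose_le_pow _ k)

lemma pow_sum_card_commonNeighborFinset_sub_le (hr : 0 < r) (hs : 0 < s) (ht : 0 < t)
    (hKr : G.CliqueFree r) (hind : ¬HasInducedCopy (completeBipartiteGraph (Fin s) (Fin t)) G)
    (k : ℕ) :
    (∑ J ∈ G.cliqueFinset k, (#(G.commonNeighborFinset J) - (r + s - 2).choose (r - 1))) ^ s ≤
      (t + r) ^ (t * (k + 1)) * (r + s) ^ (s * s) * Fintype.card V ^ (k * (s - 1) + s) := by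
  set q := (r + s - 2).choose (r - 1)
  set n := Fintype.card V
  have hR : (r + t - 2).choose (r - 1) - 1 ≤ (t + r) ^ t :=
    (Nat.sub_le _ _).trans (add_comm r t ▸ Nat.choose_add_sub_two_le_pow hr ht)
  obtain ⟨s', hs'⟩ : ∃ s', s = s' + 1 := ⟨s - 1, by omega⟩
  calc (∑ J ∈ G.cliqueFinset k, (#(G.commonNeighborFinset J) - q)) ^ s
      ≤ #(G.cliqueFinset k) ^ (s - 1) *
          ∑ J ∈ G.cliqueFinset k, (#(G.commonNeighborFinset J) - q) ^ s := by
        simpa [hs'] using pow_sum_le_card_mul_sum_pow (fun _ _ => Nat.zero_le _) s'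
    _ ≤ #(G.cliqueFinset k) ^ (s - 1) * (q ^ s * ∑ J ∈ G.cliqueFinset k,
          #{S ∈ G.indepSetFinset s | S ⊆ G.commonNeighborFinset J}) := by
        gcongr
        rw [mul_sum]
        exact sum_le_sum fun J _ => sub_pow_le_card_indepSetFinset hr hs hKr _
    _ ≤ (n ^ k) ^ (s - 1) *
          (((r + s) ^ s) ^ s * (n.choose s * ((r + t - 2).choose (r - 1) - 1).choose k)) := by
        gcongr
        · exact card_cliqueFinset_le.trans (Nat.choose_le_pow _ k)
        · exact Nat.choose_add_sub_two_le_pow hr hs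
        · exact sum_card_indepSetFinset_subset_commonNeighborFinset_le hr ht hKr hind k
    _ ≤ (n ^ k) ^ (s - 1) * (((r + s) ^ s) ^ s * (n ^ s * ((t + r) ^ t) ^ k)) := by
        gcongr
        · exact Nat.choose_le_pow n s
        · exact (Nat.choose_le_pow _ k).trans (Nat.pow_le_pow_left hR k)
    _ = (t + r) ^ (t * k) * (r + s) ^ (s * s) * n ^ (k * (s - 1) + s) := by ring
    _ ≤ (t + r) ^ (t * (k + 1)) * (r + s) ^ (s * s) * n ^ (k * (s - 1) + s) := by
        gcongr <;> omega

end SimpleGraph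

lemma Real.rpow_natCast_div_pow {x : ℝ} (hx : 0 ≤ x) {n : ℕ} (hn : n ≠ 0) (e : ℕ) :
    (x ^ ((e : ℝ) / n)) ^ n = x ^ e := by
  rw [← Real.rpow_mul_natCast hx, div_mul_cancel₀ _ (Nat.cast_ne_zero.2 hn), Real.rpow_natCast]

/-- **Theorem 2 (clique counting).** If `G` is an `n`-vertex `K_r`-free graph with no induced
`K_{s,t}` and `t_m(G)` is the number of `m`-cliques of `G`, then
`m·t_m(G) ≤ 2(t+r)^{tm/s}(r+s)^s·n^{m-(m-1)/s} + (r+s)^s·n^{m-1}`. -/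
theorem stmt2 (r s t m n : ℕ) (hr : 0 < r) (hs : 0 < s) (ht : 0 < t) (hm : 0 < m)
    (G : SimpleGraph (Fin n)) [DecidableRel G.Adj]
    (hKr : G.CliqueFree r)
    (hind : ¬ HasInducedCopy (completeBipartiteGraph (Fin s) (Fin t)) G) :
    (m : ℝ) * (G.cliqueFinset m).card ≤
      2 * (t + r : ℝ) ^ ((t * m : ℝ) / s) * (r + s : ℝ) ^ s *
        (n : ℝ) ^ ((m : ℝ) - ((m : ℝ) - 1) / s) +
      (r + s : ℝ) ^ s * (n : ℝ) ^ (m - 1) := by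
  obtain ⟨k, rfl⟩ : ∃ k, m = k + 1 := ⟨m - 1, by omega⟩
  set X := ∑ J ∈ G.cliqueFinset k, (#(G.commonNeighborFinset J) - (r + s - 2).choose (r - 1))
  have hcount := G.card_cliqueFinset_succ_mul_le_add hr hs k
  have hX := pow_sum_card_commonNeighborFinset_sub_le hr hs ht hKr hind k
  rw [Fintype.card_fin] at hcount hX
  set Y := (t + r : ℝ) ^ ((t * (k + 1 : ℕ) : ℝ) / s) * (r + s : ℝ) ^ s *
    (n : ℝ) ^ (((k + 1 : ℕ) : ℝ) - (((k + 1 : ℕ) : ℝ) - 1) / s) with hY_def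
  have hXY : (X : ℝ) ≤ Y := by
    have hexp : ((k + 1 : ℕ) : ℝ) - (((k + 1 : ℕ) : ℝ) - 1) / s =
        ((k * (s - 1) + s : ℕ) : ℝ) / s := by
      push_cast [Nat.cast_sub hs]
      field_simp
      ring
    have hmul : (t * (k + 1 : ℕ) : ℝ) = ((t * (k + 1) : ℕ) : ℝ) := by push_cast; rfl
    rw [hY_def, hexp, hmul]
    refine (pow_le_pow_iff_left₀ (by positivity) (by positivity) hs.ne').1 ?_
    rw [mul_pow, mul_pow, Real.rpow_natCast_div_pow (by positivity) hs.ne',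
      Real.rpow_natCast_div_pow (by positivity) hs.ne', ← pow_mul]
    exact_mod_cast hX
  have hcount' :
      ((k + 1 : ℕ) : ℝ) * #(G.cliqueFinset (k + 1)) ≤ (r + s : ℝ) ^ s * n ^ k + X :=
    mod_cast hcount
  have hY : 0 ≤ Y := by positivity
  rw [Nat.add_sub_cancel]
  linarith
end

section
/- For any positive integers s, t and any fixed graph H, the maximum number of edges of an n-vertex graph containing no copy of H as a subgraph and no induced copy of K_{s,t} is O(n^{2-1/s}), where the implied constant depends only on H, s, and t. -/
open SimpleGraph Finset

/-- `H` occurs in `G` as a (not necessarily induced) subgraph. -/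
def HasCopy {α β : Type*} (H : SimpleGraph α) (G : SimpleGraph β) : Prop :=
  ∃ f : α → β, Function.Injective f ∧ ∀ a b, H.Adj a b → G.Adj (f a) (f b)

/-!
Let `m = |V(H)|`, so `G` is `K_m`-free. By Ramsey's theorem every set of `R(m, s)` vertices
contains an independent `s`-set, and every independent `s`-set `A` has fewer than `R(m, t)` common
neighbours, since an independent `t`-set among them would span an induced `K_{s,t}` together
with `A`. Count the pairs `(v, A)` with `A` an independent `s`-subset of `N(v)`: by supersaturation
a vertex of degree `d` lies in at least `C(d, s) / C(R(m, s), s) - 1` of them, while each of the at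
most `C(n, s)` sets `A` lies in fewer than `R(m, t)`. Hence `∑ C(d_v, s) = O(n^s)`, and the power
mean inequality turns this into `∑ d_v = O(n^(2 - 1/s))`.
-/

open scoped Nat

theorem Nat.pow_sub_le_factorial_mul_choose (d s : ℕ) : (d - s) ^ s ≤ s ! * d.choose s :=
  calc (d - s) ^ s ≤ (d + 1 - s) ^ s := Nat.pow_le_pow_left (by omega) s
    _ ≤ d.descFactorial s := d.pow_sub_le_descFactorial s
    _ = s ! * d.choose s := d.descFactorial_eq_factorial_mul_choose s

theorem Real.le_mul_rpow_of_pow_le {X K N : ℝ} {s : ℕ} (hs : 0 < s) (hX : 0 ≤ X) (hK : 0 ≤ K)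
    (hN : 0 ≤ N) (h : X ^ s ≤ K * N ^ (2 * s - 1)) :
    X ≤ K ^ (1 / s : ℝ) * N ^ (2 - 1 / s : ℝ) := by
  calc X = (X ^ s) ^ (1 / s : ℝ) := by rw [one_div, Real.pow_rpow_inv_natCast hX hs.ne']
    _ ≤ (K * N ^ (2 * s - 1)) ^ (1 / s : ℝ) := by gcongr
    _ = K ^ (1 / s : ℝ) * N ^ (2 - 1 / s : ℝ) := by
      rw [Real.mul_rpow hK (by positivity), ← Real.rpow_natCast, ← Real.rpow_mul hN]
      congr 2
      rw [Nat.cast_sub (by omega)]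
      field_simp
      push_cast
      ring

theorem Finset.sum_le_of_sum_choose_le {ι : Type*} (S : Finset ι) (x : ι → ℕ) {s : ℕ}
    (hs : 0 < s) {K : ℝ} (hK : 0 ≤ K) (h : ((∑ i ∈ S, (x i).choose s : ℕ) : ℝ) ≤ K * #S ^ s) :
    ((∑ i ∈ S, x i : ℕ) : ℝ) ≤ ((s ! * K) ^ (1 / s : ℝ) + s) * (#S : ℝ) ^ (2 - 1 / s : ℝ) := by
  have hnonneg : ∀ i ∈ S, (0 : ℝ) ≤ (x i - s : ℕ) := fun i _ => Nat.cast_nonneg _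
  have hpow : ∑ i ∈ S, ((x i - s : ℕ) : ℝ) ^ s ≤ s ! * K * #S ^ s := by
    calc ∑ i ∈ S, ((x i - s : ℕ) : ℝ) ^ s ≤ ∑ i ∈ S, (s ! * (x i).choose s : ℝ) := by
          gcongr with i; exact_mod_cast (x i).pow_sub_le_factorial_mul_choose s
      _ = s ! * ((∑ i ∈ S, (x i).choose s : ℕ) : ℝ) := by push_cast; rw [mul_sum]
      _ ≤ s ! * K * #S ^ s := by rw [mul_assoc]; gcongr
  have hjensen : (∑ i ∈ S, ((x i - s : ℕ) : ℝ)) ^ s ≤ s ! * K * (#S : ℝ) ^ (2 * s - 1) := by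
    have jensen := pow_sum_le_card_mul_sum_pow hnonneg (s - 1)
    rw [Nat.sub_add_cancel hs] at jensen
    calc (∑ i ∈ S, ((x i - s : ℕ) : ℝ)) ^ s ≤ (#S : ℝ) ^ (s - 1) * (s ! * K * #S ^ s) := by
          grw [jensen, hpow]
      _ = _ := by rw [mul_left_comm, ← pow_add]; congr 2; omega
  have hsum_sub_le :=
    Real.le_mul_rpow_of_pow_le hs (sum_nonneg hnonneg) (by positivity) (by positivity) hjensen
  have hshift : ((∑ i ∈ S, x i : ℕ) : ℝ) ≤ ∑ i ∈ S, ((x i - s : ℕ) : ℝ) + s * #S := by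
    rw [← nsmul_eq_mul', ← sum_const, ← sum_add_distrib]
    push_cast
    gcongr with i
    exact_mod_cast (show x i ≤ x i - s + s by omega)
  have hcard : (#S : ℝ) ≤ (#S : ℝ) ^ (2 - 1 / s : ℝ) := by
    rcases Nat.eq_zero_or_pos #S with h0 | h0
    · rw [h0, Nat.cast_zero]; exact Real.rpow_nonneg le_rfl _
    · refine Real.self_le_rpow_of_one_le (by exact_mod_cast h0) ?_
      have : 1 / (s : ℝ) ≤ 1 := div_le_one_of_le₀ (by exact_mod_cast hs) (by positivity)
      linarith
  nlinarith [Nat.cast_nonneg (α := ℝ) s]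

theorem Finset.choose_card_le_mul_card_filter_subset {α : Type*} [DecidableEq α]
    {𝒜 : Finset (Finset α)} {U : Finset α} {s T : ℕ} (h𝒜 : (𝒜 : Set (Finset α)).Sized s)
    (hTU : T ≤ #U) (hU : ∀ B ⊆ U, #B = T → ∃ A ∈ 𝒜, A ⊆ B) :
    (#U).choose s ≤ T.choose s * #{A ∈ 𝒜 | A ⊆ U} := by
  have hsT : s ≤ T := by
    obtain ⟨B, hBU, hB⟩ := exists_subset_card_eq hTU
    obtain ⟨A, hA, hAB⟩ := hU B hBU hB
    exact h𝒜 hA ▸ hB ▸ card_le_card hAB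
  -- double count the pairs `A ⊆ B` with `A ∈ 𝒜` and `B` a `T`-subset of `U`
  have hcount : #(U.powersetCard T) * 1 ≤ #{A ∈ 𝒜 | A ⊆ U} * (#U - s).choose (T - s) := by
    refine card_mul_le_card_mul (fun B A => A ⊆ B) (fun B hB => ?_) (fun A hA => ?_)
    · obtain ⟨hBU, hB⟩ := mem_powersetCard.1 hB
      obtain ⟨A, hA, hAB⟩ := hU B hBU hB
      exact card_pos.2 ⟨A, mem_filter.2 ⟨mem_filter.2 ⟨hA, hAB.trans hBU⟩, hAB⟩⟩
    · obtain ⟨hA, hAU⟩ := mem_filter.1 hA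
      rw [bipartiteBelow, card_filter_powersetCard_subset A U T hAU (h𝒜 hA ▸ hsT), h𝒜 hA]
  rw [card_powersetCard, mul_one] at hcount
  have hpos : 0 < (#U - s).choose (T - s) := Nat.choose_pos (by omega)
  refine Nat.le_of_mul_le_mul_right ?_ hpos
  calc (#U).choose s * (#U - s).choose (T - s) = (#U).choose T * T.choose s :=
        (Nat.choose_mul hsT).symm
    _ ≤ #{A ∈ 𝒜 | A ⊆ U} * (#U - s).choose (T - s) * T.choose s := by gcongr
    _ = _ := by ring

namespace SimpleGraph

variable {V : Type*}

theorem exists_isNClique_or_isNIndepSet_s3 (a b : ℕ) :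
    ∃ R : ℕ, ∀ {V : Type*} [DecidableEq V] (G : SimpleGraph V) (U : Finset V), R ≤ #U →
      (∃ K ⊆ U, G.IsNClique a K) ∨ ∃ I ⊆ U, G.IsNIndepSet b I := by
  induction a generalizing b with
  | zero => exact ⟨0, fun G U _ => .inl ⟨∅, empty_subset U, by simp⟩⟩
  | succ a iha =>
    induction b with
    | zero => exact ⟨0, fun G U _ => .inr ⟨∅, empty_subset U, by simp [isNIndepSet_iff]⟩⟩
    | succ b ihb =>
      obtain ⟨R₁, hR₁⟩ := iha (b + 1)
      obtain ⟨R₂, hR₂⟩ := ihb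
      refine ⟨R₁ + R₂ + 1, fun {V} _ G U hU => ?_⟩
      classical
      obtain ⟨v, hv⟩ : U.Nonempty := card_pos.1 (by omega)
      have hsplit :
          R₁ ≤ #{x ∈ U.erase v | G.Adj v x} ∨ R₂ ≤ #{x ∈ U.erase v | ¬G.Adj v x} := by
        have := card_filter_add_card_filter_not (s := U.erase v) (fun x => G.Adj v x)
        rw [card_erase_of_mem hv] at this
        omega
      have hsub {p : V → Prop} [DecidablePred p] : {x ∈ U.erase v | p x} ⊆ U :=
        (filter_subset _ _).trans (erase_subset _ _)
      rcases hsplit with h | h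
      · rcases hR₁ G _ h with ⟨K, hK, hKc⟩ | ⟨I, hI, hIi⟩
        · refine .inl ⟨insert v K, insert_subset hv (hK.trans hsub), hKc.insert fun x hx => ?_⟩
          exact (mem_filter.1 (hK hx)).2
        · exact .inr ⟨I, hI.trans hsub, hIi⟩
      · rcases hR₂ G _ h with ⟨K, hK, hKc⟩ | ⟨I, hI, hIi⟩
        · exact .inl ⟨K, hK.trans hsub, hKc⟩
        · refine .inr ⟨insert v I, insert_subset hv (hI.trans hsub), ?_⟩
          rw [← isNClique_compl] at hIi ⊢
          refine hIi.insert fun x hx => ?_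
          obtain ⟨hxU, hvx⟩ := mem_filter.1 (hI hx)
          exact ⟨(ne_of_mem_erase hxU).symm, hvx⟩

theorem cliqueFree_card_of_not_hasCopy {W : Type*} [Fintype W] {H : SimpleGraph W}
    {G : SimpleGraph V} (h : ¬HasCopy H G) : G.CliqueFree (Fintype.card W) := by
  rw [cliqueFree_iff_top_free]
  rintro ⟨f⟩
  exact h ⟨f, f.injective, fun a b hab => f.toHom.map_adj hab.ne⟩

theorem hasInducedCopy_completeBipartiteGraph_s3 {G : SimpleGraph V} {s t : ℕ} {A I : Finset V}
    (hA : G.IsNIndepSet s A) (hI : G.IsNIndepSet t I) (hAI : ∀ a ∈ A, ∀ b ∈ I, G.Adj a b) :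
    HasInducedCopy (completeBipartiteGraph (Fin s) (Fin t)) G := by
  classical
  let eA : Fin s → V := fun i => (A.equivFinOfCardEq hA.card_eq).symm i
  let eI : Fin t → V := fun j => (I.equivFinOfCardEq hI.card_eq).symm j
  have hAmem (i : Fin s) : eA i ∈ A := Subtype.prop _
  have hImem (j : Fin t) : eI j ∈ I := Subtype.prop _
  have hAinj : Function.Injective eA := Subtype.val_injective.comp (Equiv.injective _)
  have hIinj : Function.Injective eI := Subtype.val_injective.comp (Equiv.injective _)
  have hinj : Function.Injective (Sum.elim eA eI) :=
    hAinj.sumElim hIinj fun i j h => G.irrefl (h ▸ hAI _ (hAmem i) _ (hImem j))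
  refine ⟨⟨⟨Sum.elim eA eI, hinj⟩, ?_⟩⟩
  rintro (i | j) (i' | j')
  all_goals simp only [Function.Embedding.coeFn_mk, Sum.elim_inl, Sum.elim_inr,
    completeBipartiteGraph_adj, Sum.isLeft_inl, Sum.isLeft_inr, Sum.isRight_inl, Sum.isRight_inr,
    Bool.false_eq_true, and_true, and_false, or_false, false_or, iff_true, iff_false]
  · exact fun h => hA.isIndepSet (hAmem i) (hAmem i') h.ne h
  · exact hAI _ (hAmem i) _ (hImem j')
  · exact (hAI _ (hAmem i') _ (hImem j)).symm
  · exact fun h => hI.isIndepSet (hImem j) (hImem j') h.ne h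

section Counting

variable [Fintype V] [DecidableEq V] {G : SimpleGraph V} [DecidableRel G.Adj] {s t R T : ℕ}

theorem sized_indepSetFinset : (G.indepSetFinset s : Set (Finset V)).Sized s :=
  fun _ hA => (mem_indepSetFinset_iff.1 hA).card_eq

theorem card_filter_subset_neighborFinset_lt
    (hT : ∀ U : Finset V, T ≤ #U → ∃ I ⊆ U, G.IsNIndepSet t I)
    (hind : ¬HasInducedCopy (completeBipartiteGraph (Fin s) (Fin t)) G) {A : Finset V}
    (hA : G.IsNIndepSet s A) : #{v | A ⊆ G.neighborFinset v} < T := by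
  by_contra! h
  obtain ⟨I, hIU, hI⟩ := hT _ h
  refine hind (hasInducedCopy_completeBipartiteGraph_s3 hA hI fun a ha b hb => ?_)
  exact ((mem_neighborFinset ..).1 ((mem_filter.1 (hIU hb)).2 ha)).symm

theorem choose_degree_le (hR : ∀ U : Finset V, R ≤ #U → ∃ A ⊆ U, G.IsNIndepSet s A) (v : V) :
    (G.degree v).choose s ≤
      R.choose s * (#{A ∈ G.indepSetFinset s | A ⊆ G.neighborFinset v} + 1) := by
  rw [← card_neighborFinset_eq_degree]
  rcases lt_or_ge #(G.neighborFinset v) R with h | h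
  · exact (Nat.choose_le_choose s h.le).trans (Nat.le_mul_of_pos_right _ (Nat.succ_pos _))
  · refine (choose_card_le_mul_card_filter_subset sized_indepSetFinset h fun B _ hB => ?_).trans
      (Nat.mul_le_mul_left _ (Nat.le_succ _))
    obtain ⟨A, hAB, hA⟩ := hR B hB.ge
    exact ⟨A, mem_indepSetFinset_iff.2 hA, hAB⟩

theorem sum_choose_degree_le (hR : ∀ U : Finset V, R ≤ #U → ∃ A ⊆ U, G.IsNIndepSet s A)
    (hT : ∀ U : Finset V, T ≤ #U → ∃ I ⊆ U, G.IsNIndepSet t I)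
    (hind : ¬HasInducedCopy (completeBipartiteGraph (Fin s) (Fin t)) G) :
    ∑ v, (G.degree v).choose s ≤
      R.choose s * (T * (Fintype.card V).choose s + Fintype.card V) := by
  have hpairs : ∑ v, #{A ∈ G.indepSetFinset s | A ⊆ G.neighborFinset v} ≤
      T * (Fintype.card V).choose s :=
    calc ∑ v, #{A ∈ G.indepSetFinset s | A ⊆ G.neighborFinset v}
        = ∑ A ∈ G.indepSetFinset s, #{v | A ⊆ G.neighborFinset v} :=
          sum_card_bipartiteAbove_eq_sum_card_bipartiteBelow _
      _ ≤ ∑ _A ∈ G.indepSetFinset s, T := sum_le_sum fun A hA =>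
          (card_filter_subset_neighborFinset_lt hT hind (mem_indepSetFinset_iff.1 hA)).le
      _ ≤ T * (Fintype.card V).choose s := by
          rw [sum_const, smul_eq_mul, mul_comm]
          exact Nat.mul_le_mul_left _ sized_indepSetFinset.card_le
  calc ∑ v, (G.degree v).choose s
      ≤ ∑ v, R.choose s * (#{A ∈ G.indepSetFinset s | A ⊆ G.neighborFinset v} + 1) :=
        sum_le_sum fun v _ => choose_degree_le hR v
    _ = R.choose s *
          (∑ v, #{A ∈ G.indepSetFinset s | A ⊆ G.neighborFinset v} + Fintype.card V) := by
        rw [← mul_sum, sum_add_distrib, sum_const, card_univ, smul_eq_mul, mul_one]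
    _ ≤ _ := by gcongr

end Counting

end SimpleGraph

theorem stmt3_general (s t : ℕ) (hs : 0 < s)
    {W : Type*} [Fintype W] (H : SimpleGraph W) :
    ∃ C : ℝ, ∀ (n : ℕ) (G : SimpleGraph (Fin n)) [DecidableRel G.Adj],
      ¬ HasCopy H G →
      ¬ HasInducedCopy (completeBipartiteGraph (Fin s) (Fin t)) G →
      (G.edgeFinset.card : ℝ) ≤ C * (n : ℝ) ^ ((2 : ℝ) - 1 / s) := by
  obtain ⟨R, hR⟩ := exists_isNClique_or_isNIndepSet_s3.{0} (Fintype.card W) s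
  obtain ⟨T, hT⟩ := exists_isNClique_or_isNIndepSet_s3.{0} (Fintype.card W) t
  set K : ℝ := R.choose s * (T + 1) with hK
  have hK0 : 0 ≤ K := by rw [hK]; positivity
  refine ⟨(s ! * K) ^ (1 / s : ℝ) + s, fun n G _ hH hind => ?_⟩
  have hG := cliqueFree_card_of_not_hasCopy hH
  have hsum := sum_choose_degree_le
    (fun U hU => (hR G U hU).resolve_left fun ⟨Q, _, hQ⟩ => hG Q hQ)
    (fun U hU => (hT G U hU).resolve_left fun ⟨Q, _, hQ⟩ => hG Q hQ) hind
  rw [Fintype.card_fin] at hsum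
  have hsum_real : ((∑ v, (G.degree v).choose s : ℕ) : ℝ) ≤ K * (#(univ : Finset (Fin n)) : ℝ) ^ s := by
    rw [card_univ, Fintype.card_fin]
    calc ((∑ v, (G.degree v).choose s : ℕ) : ℝ)
        ≤ ((R.choose s * (T * n ^ s + n ^ s) : ℕ) : ℝ) := by
          grw [hsum]
          gcongr
          exacts [n.choose_le_pow s, Nat.le_self_pow hs.ne' n]
      _ = K * n ^ s := by push_cast; ring
  have hdeg := sum_le_of_sum_choose_le univ (fun v => G.degree v) hs hK0 hsum_real
  rw [sum_degrees_eq_twice_card_edges, card_univ, Fintype.card_fin] at hdeg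
  push_cast at hdeg
  linarith [(Nat.cast_nonneg #G.edgeFinset : (0 : ℝ) ≤ _)]

/-- **Corollary.** For any positive integers `s`, `t` and any fixed graph `H`,
`ex(n, H, K_{s,t}-ind) = O(n^{2-1/s})`, the constant depending only on `H`, `s`, `t`. -/
theorem stmt3 (s t : ℕ) (hs : 0 < s) (ht : 0 < t)
    {W : Type*} [Fintype W] (H : SimpleGraph W) :
    ∃ C : ℝ, ∀ (n : ℕ) (G : SimpleGraph (Fin n)) [DecidableRel G.Adj],
      ¬ HasCopy H G →
      ¬ HasInducedCopy (completeBipartiteGraph (Fin s) (Fin t)) G →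
      (G.edgeFinset.card : ℝ) ≤ C * (n : ℝ) ^ ((2 : ℝ) - 1 / s) :=
  stmt3_general s t hs H
end

section
/- Let t ≥ 2 be an integer. If G is a graph with n vertices, minimum degree d, and no induced copy of K_{2,t+1}, then the clique number of G satisfies ω(G) ≥ (d²/(2nt) · (1 − o(1)))^{1/t} − t. More precisely, ω(G) ≥ (d²/(2n) · (1 − 2/n^{1/t}))^{1/t} − t. -/
open SimpleGraph Finset

/-!
Let `k = ω(G)`, `d` the minimum degree and `C = (k + t).choose t`. Two nonadjacent vertices have
fewer than `C` common neighbours: otherwise Ramsey's bound finds in their common neighbourhood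
either a `(k + 1)`-clique or an independent `(t + 1)`-set, and the latter is an induced `K_{2,t+1}`.
Deleting nonadjacent pairs from a neighbourhood `N(v)` of size `f` until a clique is left shows
that `N(v)` spans at most `f(f + 2C + 2k)/4` edges, so it contains at least `f(f - 2C - 2k - 2)/2`
ordered nonadjacent pairs. Counting triples `(v, x, y)` with `x, y ∈ N(v)`
nonadjacent in two ways gives `n·d(d - 2C - 2k - 2) ≤ 2C·n(n - 1 - d)`, whence
`d² ≤ 2n(C + k + 1) ≤ 2n(k + t)^t`. The theorem follows by taking `t`-th roots, since the factor
`1 - 2/n^{1/t}` lies in `[-1, 1]`.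
-/

theorem Nat.mul_self_le_add_mul_of_le {d f a c : ℕ} (hdf : d ≤ f) (h : f * f ≤ a + f * c) :
    d * d ≤ a + d * c := by
  rcases le_total d c with hdc | hcd
  · nlinarith
  · nlinarith

theorem Nat.two_mul_choose_le_pow (n : ℕ) {t : ℕ} (ht : 2 ≤ t) : 2 * n.choose t ≤ n ^ t :=
  calc 2 * n.choose t ≤ t.factorial * n.choose t := by
        gcongr; exact ht.trans (Nat.self_le_factorial t)
    _ = n.descFactorial t := (Nat.descFactorial_eq_factorial_mul_choose n t).symm
    _ ≤ n ^ t := Nat.descFactorial_le_pow n t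

theorem Real.rpow_one_div_le_of_abs_le_pow {x y : ℝ} {t : ℕ} (hy : 0 ≤ y) (ht : t ≠ 0)
    (h : |x| ≤ y ^ t) : x ^ ((1 : ℝ) / t) ≤ y :=
  calc x ^ ((1 : ℝ) / t) ≤ |x| ^ ((1 : ℝ) / t) :=
        (le_abs_self _).trans (Real.abs_rpow_le_abs_rpow _ _)
    _ ≤ (y ^ t) ^ ((1 : ℝ) / t) := Real.rpow_le_rpow (abs_nonneg _) h (by positivity)
    _ = y := by rw [one_div, Real.pow_rpow_inv_natCast hy ht]

theorem abs_one_sub_two_div_rpow_le_one (n : ℕ) {r : ℝ} (hr : 0 < r) :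
    |1 - 2 / (n : ℝ) ^ r| ≤ 1 := by
  rcases Nat.eq_zero_or_pos n with rfl | hn
  · simp [Real.zero_rpow hr.ne']
  have hpow : 1 ≤ (n : ℝ) ^ r := Real.one_le_rpow (by exact_mod_cast hn) hr.le
  have hdiv : 2 / (n : ℝ) ^ r ≤ 2 := div_le_self zero_le_two hpow
  rw [abs_le]
  constructor <;> linarith [div_nonneg zero_le_two (zero_le_one.trans hpow)]

namespace SimpleGraph

variable {V : Type*}

theorem hasInducedCopy_completeBipartiteGraph_s4 (G : SimpleGraph V) {α β : Type*} (f : α ↪ V)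
    (g : β ↪ V) (hf : ∀ a a', ¬ G.Adj (f a) (f a')) (hg : ∀ b b', ¬ G.Adj (g b) (g b'))
    (hfg : ∀ a b, G.Adj (f a) (g b)) :
    HasInducedCopy (completeBipartiteGraph α β) G := by
  refine ⟨⟨⟨Sum.elim f g, f.injective.sumElim g.injective fun a b h => ?_⟩, ?_⟩⟩
  · exact G.irrefl (h ▸ hfg a b)
  · rintro (a | b) (a' | b') <;> simp [hf, hg, hfg, (hfg _ _).symm]

variable [DecidableEq V]

-- Ordered pairs: every edge of `H` inside `s` is counted twice.
def adjPairCount (H : SimpleGraph V) [DecidableRel H.Adj] (s : Finset V) : ℕ :=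
  ∑ z ∈ s, #{w ∈ s | H.Adj z w}

theorem adjPairCount_insert (H : SimpleGraph V) [DecidableRel H.Adj] {a : V} {s : Finset V}
    (ha : a ∉ s) :
    H.adjPairCount (insert a s) = H.adjPairCount s + 2 * #{w ∈ s | H.Adj a w} := by
  have hz : ∀ z ∈ s, #{w ∈ insert a s | H.Adj z w} =
      #{w ∈ s | H.Adj z w} + if H.Adj z a then 1 else 0 := by
    intro z _
    rw [filter_insert]
    split_ifs
    · exact card_insert_of_notMem fun h => ha (mem_filter.1 h).1
    · rfl
  have hsymm : {z ∈ s | H.Adj z a} = {w ∈ s | H.Adj a w} :=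
    filter_congr fun _ _ => H.adj_comm _ _
  rw [adjPairCount, adjPairCount, sum_insert ha, filter_insert, if_neg (H.irrefl),
    sum_congr rfl hz, sum_add_distrib, sum_boole, Nat.cast_id, hsymm]
  ring

variable (G : SimpleGraph V) [DecidableRel G.Adj]

theorem exists_isNClique_or_isNIndepSet_of_choose_le (a b : ℕ) {W : Finset V}
    (hW : (a + b).choose a ≤ #W) :
    (∃ s ⊆ W, G.IsNClique (a + 1) s) ∨ ∃ s ⊆ W, G.IsNIndepSet (b + 1) s := by
  -- Independent sets of `G` are cliques of `Gᶜ`, so both branches extend by `IsNClique.insert`.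
  simp only [← isNClique_compl]
  induction a generalizing b W with
  | zero =>
    obtain ⟨v, hv⟩ : W.Nonempty := card_pos.1 (by simpa using hW)
    exact .inl ⟨{v}, by simpa, by simp⟩
  | succ a iha =>
    induction b generalizing W with
    | zero =>
      obtain ⟨v, hv⟩ : W.Nonempty := card_pos.1 (by simpa using hW)
      exact .inr ⟨{v}, by simpa, by simp⟩
    | succ b ihb =>
      obtain ⟨v, hv⟩ : W.Nonempty := card_pos.1 (hW.trans_lt' (Nat.choose_pos (by omega)))
      have hpascal : (a + 1 + (b + 1)).choose (a + 1) =
          (a + (b + 1)).choose a + (a + 1 + b).choose (a + 1) := by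
        rw [show a + 1 + (b + 1) = a + (b + 1) + 1 by omega, Nat.choose_succ_succ',
          show a + (b + 1) = a + 1 + b by omega]
      have hsplit := card_filter_add_card_filter_not (s := W.erase v) (fun w => G.Adj v w)
      rw [card_erase_of_mem hv] at hsplit
      rw [hpascal] at hW
      have hsub : ∀ (p : V → Prop) [DecidablePred p], {w ∈ W.erase v | p w} ⊆ W :=
        fun _ _ => (filter_subset _ _).trans (erase_subset _ _)
      by_cases hN : (a + (b + 1)).choose a ≤ #{w ∈ W.erase v | G.Adj v w}
      · rcases iha (b + 1) hN with ⟨s, hs, hcl⟩ | ⟨s, hs, hcl⟩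
        · refine .inl ⟨insert v s, insert_subset hv (hs.trans (hsub _)), ?_⟩
          exact hcl.insert fun w hw => (mem_filter.1 (hs hw)).2
        · exact .inr ⟨s, hs.trans (hsub _), hcl⟩
      · rcases ihb (W := {w ∈ W.erase v | ¬ G.Adj v w}) (by omega) with
          ⟨s, hs, hcl⟩ | ⟨s, hs, hcl⟩
        · exact .inl ⟨s, hs.trans (hsub _), hcl⟩
        · refine .inr ⟨insert v s, insert_subset hv (hs.trans (hsub _)), ?_⟩
          refine hcl.insert fun w hw => ?_
          obtain ⟨hw, hnadj⟩ := mem_filter.1 (hs hw)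
          exact (compl_adj G v w).2 ⟨(ne_of_mem_erase hw).symm, hnadj⟩

theorem adjPairCount_add_adjPairCount_compl (s : Finset V) :
    G.adjPairCount s + Gᶜ.adjPairCount s + #s = #s * #s := by
  have hz : ∀ z ∈ s, #{w ∈ s | G.Adj z w} + #{w ∈ s | Gᶜ.Adj z w} + 1 = #s := by
    intro z hz
    have hnot : {w ∈ s | ¬ G.Adj z w} = insert z {w ∈ s | Gᶜ.Adj z w} := by
      ext w
      by_cases hw : w = z
      · simp [hw, hz]
      · simp [hw, compl_adj, Ne.symm hw]
    rw [← card_filter_add_card_filter_not (s := s) (fun w => G.Adj z w), hnot,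
      card_insert_of_notMem (by simp)]
    ring
  have := sum_congr rfl hz
  rwa [sum_add_distrib, sum_add_distrib, sum_const, sum_const, smul_eq_mul, smul_eq_mul,
    mul_one] at this

variable [Fintype V]

theorem hasInducedCopy_of_isNIndepSet_subset_commonNeighbors {t : ℕ} {x y : V}
    (hxy : Gᶜ.Adj x y) {s : Finset V} (hs : s ⊆ G.neighborFinset x ∩ G.neighborFinset y)
    (hsi : G.IsNIndepSet (t + 1) s) :
    HasInducedCopy (completeBipartiteGraph (Fin 2) (Fin (t + 1))) G := by
  obtain ⟨hne, hnadj⟩ := (compl_adj G x y).1 hxy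
  let f : Fin 2 ↪ V := ⟨![x, y], fun i j h => by fin_cases i <;> fin_cases j <;> simp_all [eq_comm]⟩
  let g : Fin (t + 1) ↪ V :=
    (s.equivFinOfCardEq hsi.card_eq).symm.toEmbedding.trans (Function.Embedding.subtype _)
  have hf : ∀ i, f i = ![x, y] i := fun _ => rfl
  have hg : ∀ b, g b ∈ s := fun b => Subtype.prop _
  refine G.hasInducedCopy_completeBipartiteGraph_s4 f g (fun i j => ?_) (fun b b' hadj => ?_)
    (fun i b => ?_)
  · fin_cases i <;> fin_cases j <;> simp [hf, hnadj, G.adj_comm y x]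
  · exact hsi.isIndepSet (hg b) (hg b') (G.ne_of_adj hadj) hadj
  · have := hs (hg b)
    fin_cases i <;> simp_all

theorem card_commonNeighbors_lt_choose {t : ℕ}
    (hind : ¬ HasInducedCopy (completeBipartiteGraph (Fin 2) (Fin (t + 1))) G) {x y : V}
    (hxy : Gᶜ.Adj x y) :
    #(G.neighborFinset x ∩ G.neighborFinset y) < (G.cliqueNum + t).choose t := by
  by_contra! h
  rw [← Nat.choose_symm_add] at h
  rcases G.exists_isNClique_or_isNIndepSet_of_choose_le _ _ h with ⟨s, -, hs⟩ | ⟨s, hs, hsi⟩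
  · have := hs.isClique.card_le_cliqueNum
    rw [hs.card_eq] at this
    omega
  · exact hind (G.hasInducedCopy_of_isNIndepSet_subset_commonNeighbors hxy hs hsi)

theorem card_filter_adj_add_card_filter_adj_le (s : Finset V) (x y : V) :
    #{w ∈ s | G.Adj x w} + #{w ∈ s | G.Adj y w} ≤
      #s + #(G.neighborFinset x ∩ G.neighborFinset y) := by
  have hN : ∀ v, {w ∈ s | G.Adj v w} ⊆ G.neighborFinset v := fun v w hw => by
    simpa using (mem_filter.1 hw).2
  rw [← card_union_add_card_inter]
  exact add_le_add (card_le_card (union_subset (filter_subset _ _) (filter_subset _ _)))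
    (card_le_card (inter_subset_inter (hN x) (hN y)))

theorem two_mul_adjPairCount_le {C : ℕ}
    (hC : ∀ x y, Gᶜ.Adj x y → #(G.neighborFinset x ∩ G.neighborFinset y) ≤ C) (s : Finset V) :
    2 * G.adjPairCount s ≤ #s * (#s + 2 * C + 2 * G.cliqueNum) := by
  induction s using Finset.strongInduction with
  | H s ih =>
    by_cases hs : G.IsClique (s : Set V)
    · have hk : #s ≤ G.cliqueNum := hs.card_le_cliqueNum
      have hpairs : G.adjPairCount s ≤ #s * #s :=
        (sum_le_sum fun z _ => card_filter_le s _).trans_eq (by simp)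
      nlinarith
    · obtain ⟨x, hx, y, hy, hxy, hnadj⟩ : ∃ x ∈ s, ∃ y ∈ s, x ≠ y ∧ ¬ G.Adj x y := by
        simpa [IsClique, Set.Pairwise] using hs
      set s' := (s.erase x).erase y
      have hys : y ∈ s.erase x := mem_erase.2 ⟨Ne.symm hxy, hy⟩
      have hx' : x ∉ insert y s' := by simp [s', hxy]
      have hy' : y ∉ s' := by simp [s']
      have hs' : s = insert x (insert y s') := by rw [insert_erase hys, insert_erase hx]
      have hpair := G.card_filter_adj_add_card_filter_adj_le s' x y
      have hcod := hC x y ((compl_adj G x y).2 ⟨hxy, hnadj⟩)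
      have ih' := ih s' ((erase_subset _ _).trans_ssubset (erase_ssubset hx))
      rw [hs', adjPairCount_insert _ hx', adjPairCount_insert _ hy', filter_insert, if_neg hnadj,
        card_insert_of_notMem hx', card_insert_of_notMem hy']
      nlinarith

theorem sum_adjPairCount_compl_neighborFinset :
    ∑ v, Gᶜ.adjPairCount (G.neighborFinset v) =
      ∑ x, ∑ y ∈ Gᶜ.neighborFinset x, #(G.neighborFinset x ∩ G.neighborFinset y) := by
  unfold adjPairCount
  rw [sum_comm' (s' := fun x => G.neighborFinset x) (t' := univ) (by simp [G.adj_comm])]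
  refine sum_congr rfl fun x _ => ?_
  have hleft : ∀ v ∈ G.neighborFinset x,
      #{y ∈ G.neighborFinset v | Gᶜ.Adj x y} = #{y ∈ Gᶜ.neighborFinset x | G.Adj v y} := by
    intro v _
    congr 1
    ext y
    simp [and_comm]
  have hright : ∀ y ∈ Gᶜ.neighborFinset x,
      #{v ∈ G.neighborFinset x | G.Adj v y} = #(G.neighborFinset x ∩ G.neighborFinset y) := by
    intro y _
    congr 1
    ext v
    simp [G.adj_comm v y]
  rw [sum_congr rfl hleft, ← sum_congr rfl hright]
  exact sum_card_bipartiteAbove_eq_sum_card_bipartiteBelow _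

theorem sum_adjPairCount_compl_neighborFinset_le {C : ℕ}
    (hC : ∀ x y, Gᶜ.Adj x y → #(G.neighborFinset x ∩ G.neighborFinset y) ≤ C) :
    ∑ v, Gᶜ.adjPairCount (G.neighborFinset v) ≤
      Fintype.card V * ((Fintype.card V - 1 - G.minDegree) * C) := by
  rw [sum_adjPairCount_compl_neighborFinset]
  refine (sum_le_sum fun x _ => (?_ : _ ≤ (Fintype.card V - 1 - G.minDegree) * C)).trans_eq
    (by rw [sum_const, card_univ, smul_eq_mul])
  calc ∑ y ∈ Gᶜ.neighborFinset x, #(G.neighborFinset x ∩ G.neighborFinset y)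
      ≤ Gᶜ.degree x * C :=
        (sum_le_sum fun y hy => hC x y ((mem_neighborFinset _ _ _).1 hy)).trans_eq
          (by rw [sum_const, smul_eq_mul, card_neighborFinset_eq_degree])
    _ ≤ (Fintype.card V - 1 - G.minDegree) * C := by
      rw [degree_compl]
      gcongr
      exact G.minDegree_le_degree x

theorem degree_mul_self_le {C : ℕ}
    (hC : ∀ x y, Gᶜ.Adj x y → #(G.neighborFinset x ∩ G.neighborFinset y) ≤ C) (v : V) :
    G.degree v * G.degree v ≤
      2 * Gᶜ.adjPairCount (G.neighborFinset v) + G.degree v * (2 * C + 2 * G.cliqueNum + 2) := by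
  have hsplit := G.adjPairCount_add_adjPairCount_compl (G.neighborFinset v)
  have hG := G.two_mul_adjPairCount_le hC (G.neighborFinset v)
  rw [card_neighborFinset_eq_degree] at hsplit hG
  nlinarith

end SimpleGraph

theorem SimpleGraph.minDegree_sq_le {V : Type*} [Fintype V] (G : SimpleGraph V)
    [DecidableRel G.Adj] {t : ℕ} (ht : 2 ≤ t)
    (hind : ¬ HasInducedCopy (completeBipartiteGraph (Fin 2) (Fin (t + 1))) G) :
    G.minDegree ^ 2 ≤ 2 * Fintype.card V * (G.cliqueNum + t) ^ t := by
  classical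
  rcases isEmpty_or_nonempty V with hV | hV
  · simp [minDegree]
  set n := Fintype.card V
  set d := G.minDegree
  set k := G.cliqueNum
  set C := (k + t).choose t
  have hC : ∀ x y, Gᶜ.Adj x y → #(G.neighborFinset x ∩ G.neighborFinset y) ≤ C :=
    fun x y hxy => (G.card_commonNeighbors_lt_choose hind hxy).le
  have hlow : n * (d * d) ≤
      2 * ∑ v, Gᶜ.adjPairCount (G.neighborFinset v) + n * (d * (2 * C + 2 * k + 2)) := by
    have := sum_le_sum fun v (_ : v ∈ univ) =>
      Nat.mul_self_le_add_mul_of_le (G.minDegree_le_degree v) (G.degree_mul_self_le hC v)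
    simpa [sum_add_distrib, mul_sum] using this
  have hup := G.sum_adjPairCount_compl_neighborFinset_le hC
  have hk : k + 1 ≤ C := by
    show k + 1 ≤ (k + t).choose t
    rw [← Nat.choose_symm_add, ← Nat.choose_succ_self_right k]
    exact Nat.choose_le_choose k (by omega)
  have hpow := Nat.two_mul_choose_le_pow (k + t) ht
  obtain ⟨m, hm⟩ : ∃ m, n = m + d + 1 := ⟨n - 1 - d, by have := G.minDegree_lt_card; omega⟩
  rw [show n - 1 - d = m by omega] at hup
  have hcancel : d * d ≤ 2 * (m * C) + d * (2 * C + 2 * k + 2) :=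
    Nat.le_of_mul_le_mul_left (by nlinarith) Fintype.card_pos
  nlinarith

/-- **Theorem 3.** Let `t ≥ 2`. If `G` is a graph with `n` vertices, minimum degree `d`,
and no induced `K_{2,t+1}`, then `ω(G) ≥ (d²/(2n)·(1 − 2/n^{1/t}))^{1/t} − t`
(the precise form of `ω(G) ≥ (d²/(2nt)·(1−o(1)))^{1/t} − t`). -/
theorem stmt4 (t : ℕ) (ht : 2 ≤ t) {n : ℕ} (G : SimpleGraph (Fin n))
    [DecidableRel G.Adj]
    (hind : ¬ HasInducedCopy (completeBipartiteGraph (Fin 2) (Fin (t + 1))) G) :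
    ((G.minDegree : ℝ) ^ 2 / (2 * n) * (1 - 2 / (n : ℝ) ^ ((1 : ℝ) / t))) ^ ((1 : ℝ) / t)
      - t ≤ G.cliqueNum := by
  have hcomb := G.minDegree_sq_le ht hind
  rw [Fintype.card_fin] at hcomb
  have hquot : (G.minDegree : ℝ) ^ 2 / (2 * n) ≤ ((G.cliqueNum : ℝ) + t) ^ t :=
    div_le_of_le_mul₀ (by positivity) (by positivity) (by exact_mod_cast hcomb.trans_eq (by ring))
  have hfactor := abs_one_sub_two_div_rpow_le_one n (r := 1 / t) (by positivity)
  suffices h : |(G.minDegree : ℝ) ^ 2 / (2 * n) * (1 - 2 / (n : ℝ) ^ ((1 : ℝ) / t))| ≤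
      ((G.cliqueNum : ℝ) + t) ^ t by
    linarith [Real.rpow_one_div_le_of_abs_le_pow (by positivity) (by omega) h]
  rw [abs_mul, abs_of_nonneg (by positivity)]
  exact (mul_le_of_le_one_right (by positivity) hfactor).trans hquot
end

section
/- Let G be a graph on n vertices with no C_{2k+1} subgraph and no induced K_{2,t}, where k ≥ 2 and t ≥ 2. Then for any two distinct non-adjacent vertices x and y of G, the number of their common neighbors is at most (2k−2)(t−1). -/
/-!
Let `S` be the common neighbourhood of `x` and `y`. A path `v₁ ⋯ v_{2k-1}` inside `S` closes
through `x` and `y` into the cycle `y v₁ x v₂ ⋯ v_{2k-1} y` of length `2k + 1`, and an independent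
`t`-set inside `S` spans an induced `K_{2,t}` together with `x` and `y`. So every path in `S` has at
most `2k - 2` vertices and every independent set of `S` at most `t - 1`, and the Erdős–Gallai bound
`|S| ≤ (2k - 2)(t - 1)` follows. That bound is proved for ascending paths with respect to a linear
order on the vertices: the vertices of `S` without a smaller neighbour in `S` form an independent
set, and deleting them shortens every ascending path by its first vertex.
-/

open SimpleGraph Finset

section

variable {V : Type*} {G : SimpleGraph V}

theorem card_le_mul_of_ascending_path_length_le [LinearOrder V] (a c : ℕ) (S : Finset V)
    (hpath : ∀ l : List V, l.IsChain (fun u v => G.Adj u v ∧ u < v) → (∀ v ∈ l, v ∈ S) →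
      l.length ≤ a)
    (hindep : ∀ T ⊆ S, G.IsIndepSet (T : Set V) → #T ≤ c) :
    #S ≤ a * c := by
  classical
  induction a generalizing S with
  | zero =>
    suffices S = ∅ by simp [this]
    refine eq_empty_of_forall_notMem fun v hv => ?_
    simpa using hpath [v] (.singleton v) (by simpa using hv)
  | succ a ih =>
    set M := S.filter fun v => ∀ u ∈ S, G.Adj u v → v ≤ u
    have hM : G.IsIndepSet (M : Set V) := fun u hu v hv huv hadj => by
      simp only [coe_filter, Set.mem_ofPred_eq, M] at hu hv
      exact huv (le_antisymm (hu.2 v hv.1 hadj.symm) (hv.2 u hu.1 hadj))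
    have hrest : #(S.filter fun v => ¬ ∀ u ∈ S, G.Adj u v → v ≤ u) ≤ a * c := by
      refine ih _ (fun l hl hlS => ?_) fun T hT hTi => hindep T (hT.trans (filter_subset _ _)) hTi
      cases l with
      | nil => simp
      | cons w r =>
        obtain ⟨hwS, hw⟩ := mem_filter.mp (hlS w List.mem_cons_self)
        push Not at hw
        obtain ⟨u, huS, hadj, huw⟩ := hw
        have := hpath (u :: w :: r) (hl.cons_cons ⟨hadj, huw⟩)
          (List.forall_mem_cons.mpr ⟨huS, fun v hv => (mem_filter.mp (hlS v hv)).1⟩)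
        simp only [List.length_cons] at this ⊢
        omega
    calc #S = #M + #(S.filter fun v => ¬ ∀ u ∈ S, G.Adj u v → v ≤ u) :=
          (card_filter_add_card_filter_not _).symm
      _ ≤ c + a * c := add_le_add (hindep M (filter_subset _ _) hM) hrest
      _ = (a + 1) * c := by ring

theorem hasCopy_of_isContained {α : Type*} {H : SimpleGraph α} (h : H ⊑ G) : HasCopy H G :=
  let ⟨f⟩ := h
  ⟨f.toHom, f.injective, fun _ _ hab => f.toHom.map_adj hab⟩

theorem hasCopy_cycleGraph_of_isChain_commonNeighbors {x y : V} (hxy : x ≠ y) (l : List V)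
    (hnodup : l.Nodup) (hchain : l.IsChain G.Adj) (hxyl : ∀ v ∈ l, G.Adj x v ∧ G.Adj y v)
    (hlen : 2 ≤ l.length) : HasCopy (cycleGraph (l.length + 2)) G := by
  obtain _ | ⟨v, p⟩ := l
  · simp at hlen
  have hp : p ≠ [] := by rintro rfl; simp at hlen
  have hx : ∀ w ∈ v :: p, G.Adj x w := fun w hw => (hxyl w hw).1
  have hy : ∀ w ∈ v :: p, G.Adj y w := fun w hw => (hxyl w hw).2
  -- the cycle `y v x p y`
  let q : G.Walk v y := .cons (hx v List.mem_cons_self).symm <|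
    .cons (hx _ (List.mem_cons_of_mem v (p.head_mem hp))) <|
      (Walk.ofSupport p hp hchain.of_cons).concat
        (hy _ (List.mem_cons_of_mem v (p.getLast_mem hp))).symm
  have hq : q.IsPath := by
    rw [Walk.isPath_def]
    have hxp : x ∉ v :: p := fun h => G.loopless.irrefl x (hx x h)
    have hyp : y ∉ v :: p := fun h => G.loopless.irrefl y (hy y h)
    simp only [List.mem_cons, not_or] at hxp hyp
    simp only [List.nodup_cons] at hnodup
    simp [q, Walk.support_concat, List.nodup_append, hnodup, hxp, hxy, Ne.symm hxp.1, Ne.symm hyp.1]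
    exact fun a ha h => hyp.2 (h ▸ ha)
  have hcycle : (Walk.cons (hy v List.mem_cons_self) q).IsCycle := by
    refine Walk.isCycle_iff_isPath_tail_and_le_length.mpr ⟨?_, by simp [q]⟩
    simpa [Walk.tail_cons] using hq
  refine hasCopy_of_isContained ((cycleGraph_isContained_iff (by omega)).mpr ⟨y, _, hcycle, ?_⟩)
  have := List.length_pos_iff.mpr hp
  simp [q]
  omega

theorem hasInducedCopy_completeBipartiteGraph {α β : Type*} {f : α → V} {g : β → V}
    (hf : Function.Injective f) (hg : Function.Injective g)
    (hff : ∀ a a', ¬ G.Adj (f a) (f a')) (hgg : ∀ b b', ¬ G.Adj (g b) (g b'))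
    (hfg : ∀ a b, G.Adj (f a) (g b)) :
    HasInducedCopy (completeBipartiteGraph α β) G := by
  refine ⟨⟨⟨Sum.elim f g, hf.sumElim hg fun a b h => G.loopless.irrefl (f a) ?_⟩, ?_⟩⟩
  · simpa [h] using hfg a b
  · rintro (a | b) (a' | b')
    · simpa using hff a a'
    · simpa using hfg a b'
    · simpa using (hfg a' b).symm
    · simpa using hgg b b'

theorem length_lt_of_not_hasCopy_cycleGraph [Preorder V] {x y : V} {m : ℕ} (hxy : x ≠ y)
    (hm : 2 ≤ m) (hC : ¬ HasCopy (cycleGraph (m + 2)) G) (l : List V)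
    (hchain : l.IsChain (fun u v => G.Adj u v ∧ u < v)) (hxyl : ∀ v ∈ l, G.Adj x v ∧ G.Adj y v) :
    l.length < m := by
  by_contra! hlm
  have hlen : (l.take m).length = m := List.length_take_of_le hlm
  have hcopy := hasCopy_cycleGraph_of_isChain_commonNeighbors hxy (l.take m)
    ((hchain.take m).imp fun _ _ h => h.2).sortedLT.nodup ((hchain.take m).imp fun _ _ h => h.1)
    (fun v hv => hxyl v (List.mem_of_mem_take hv)) (by omega)
  exact hC (hlen ▸ hcopy)

theorem card_lt_of_not_hasInducedCopy_completeBipartiteGraph {x y : V} {t : ℕ} (hxy : x ≠ y)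
    (hadj : ¬ G.Adj x y) (hind : ¬ HasInducedCopy (completeBipartiteGraph (Fin 2) (Fin t)) G)
    (T : Finset V) (hT : G.IsIndepSet (T : Set V)) (hxyT : ∀ v ∈ T, G.Adj x v ∧ G.Adj y v) :
    #T < t := by
  by_contra! hTt
  obtain ⟨T', hT'T, hT'⟩ := exists_subset_card_eq hTt
  let g : Fin t → V := fun i => T'.equivFin.symm (i.cast hT'.symm)
  have hgT : ∀ i, g i ∈ T := fun i => hT'T (T'.equivFin.symm _).2
  refine hind (hasInducedCopy_completeBipartiteGraph (f := ![x, y]) (g := g) ?_ ?_ ?_ ?_ ?_)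
  · simpa [Function.Injective, Fin.forall_fin_two, eq_comm] using hxy
  · intro i j hij
    simpa [g, Fin.cast_inj] using Subtype.val_injective hij
  · simp [Fin.forall_fin_two, hadj, G.adj_comm y x]
  · intro i j hadj'
    exact hT (hgT i) (hgT j) (G.ne_of_adj hadj') hadj'
  · simp [Fin.forall_fin_two, fun i => (hxyT _ (hgT i)).1, fun i => (hxyT _ (hgT i)).2]

end

theorem stmt12_general (k t : ℕ) (hk : 2 ≤ k)
    {n : ℕ} (G : SimpleGraph (Fin n)) [DecidableRel G.Adj]
    (hC : ¬ HasCopy (cycleGraph (2 * k + 1)) G)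
    (hind : ¬ HasInducedCopy (completeBipartiteGraph (Fin 2) (Fin t)) G)
    (x y : Fin n) (hxy : x ≠ y) (hadj : ¬ G.Adj x y) :
    (univ.filter fun v => G.Adj x v ∧ G.Adj y v).card ≤ (2 * k - 2) * (t - 1) := by
  refine card_le_mul_of_ascending_path_length_le (G := G) _ _ _ (fun l hl hlS => ?_)
    fun T hT hTi => ?_
  · have hC' : ¬ HasCopy (cycleGraph (2 * k - 1 + 2)) G := by
      rwa [show 2 * k - 1 + 2 = 2 * k + 1 by omega]
    have := length_lt_of_not_hasCopy_cycleGraph hxy (by omega) hC' l hl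
      fun v hv => by simpa using hlS v hv
    omega
  · have := card_lt_of_not_hasInducedCopy_completeBipartiteGraph hxy hadj hind T hTi
      fun v hv => by simpa using hT hv
    omega

/-- If `G` has no `C_{2k+1}` subgraph and no induced `K_{2,t}` (`k,t ≥ 2`), then any two
distinct non-adjacent vertices have at most `(2k−2)(t−1)` common neighbors. -/
theorem stmt12 (k t : ℕ) (hk : 2 ≤ k) (ht : 2 ≤ t)
    {n : ℕ} (G : SimpleGraph (Fin n)) [DecidableRel G.Adj]
    (hC : ¬ HasCopy (cycleGraph (2 * k + 1)) G)
    (hind : ¬ HasInducedCopy (completeBipartiteGraph (Fin 2) (Fin t)) G)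
    (x y : Fin n) (hxy : x ≠ y) (hadj : ¬ G.Adj x y) :
    (univ.filter fun v => G.Adj x v ∧ G.Adj y v).card ≤ (2 * k - 2) * (t - 1) :=
  stmt12_general k t hk G hC hind x y hxy hadj
end
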